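/- arXiv:2404.14786 — 2 statements merged into one kernel-verified Lean document; each statement's English description precedes it below -/
import Mathlib

section
/- Let B be an n×n real matrix all of whose entries are nonnegative. Then trace(exp B) = n if and only if trace(B^k) = 0 for every integer k ≥ 1. -/
/-!
Every power of an entrywise nonnegative matrix is entrywise nonnegative, so in
`trace (exp B) = ∑ₖ trace (B ^ k) / k!` all terms are nonnegative and the `k = 0` term is `n`.
Hence the sum equals `n` exactly when every term with `k ≥ 1` vanishes.
-/

open NormedSpace Nat

theorem HasSum.eq_zeroth_term_iff {α : Type*} [AddCommGroup α] [PartialOrder α]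
    [IsOrderedAddMonoid α] [TopologicalSpace α] [IsTopologicalAddGroup α] [OrderClosedTopology α]
    {f : ℕ → α} {a : α} (hf : HasSum f a) (hf_nonneg : ∀ k, 1 ≤ k → 0 ≤ f k) :
    a = f 0 ↔ ∀ k, 1 ≤ k → f k = 0 := by
  have htail : HasSum (fun k => f (k + 1)) (a - f 0) := by
    simpa using (hasSum_nat_add_iff' 1).mpr hf
  calc a = f 0 ↔ HasSum (fun k => f (k + 1)) 0 :=
        ⟨fun h => by simpa [h] using htail, fun h => sub_eq_zero.mp (htail.unique h)⟩
    _ ↔ (fun k => f (k + 1)) = 0 := hasSum_zero_iff_of_nonneg fun k => hf_nonneg _ (by omega)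
    _ ↔ ∀ k, 1 ≤ k → f k = 0 := by
        refine funext_iff.trans ⟨fun h k hk => ?_, fun h k => h _ (by omega)⟩
        obtain ⟨j, rfl⟩ := Nat.exists_eq_add_of_le' hk
        exact h j

theorem Matrix.hasSum_trace_exp {𝕂 m : Type*} [RCLike 𝕂] [Fintype m] [DecidableEq m]
    (A : Matrix m m 𝕂) : HasSum (fun k => (k ! : 𝕂)⁻¹ * (A ^ k).trace) (exp A).trace := by
  have hexp : HasSum (fun k => (k ! : 𝕂)⁻¹ • A ^ k) (exp A) :=
    open scoped Matrix.Norms.Operator in exp_series_hasSum_exp' A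
  simpa [Function.comp_def, Matrix.trace_smul] using
    hexp.map (Matrix.traceAddMonoidHom m 𝕂) continuous_id.matrix_trace

theorem Matrix.trace_pow_nonneg {R m : Type*} [Semiring R] [PartialOrder R] [IsOrderedRing R]
    [Fintype m] [DecidableEq m] {A : Matrix m m R} (hA : ∀ i j, 0 ≤ A i j) (k : ℕ) :
    0 ≤ (A ^ k).trace :=
  Finset.sum_nonneg fun i _ => Matrix.pow_apply_nonneg hA k i i

/-- If every entry of the `n × n` real matrix `B` is nonnegative, then the trace of
the matrix exponential of `B` equals `n` if and only if the trace of `B ^ k`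
vanishes for every `k ≥ 1`. -/
theorem trace_exp_eq_iff_trace_pow_eq_zero (n : ℕ) (B : Matrix (Fin n) (Fin n) ℝ)
    (hB : ∀ i j, 0 ≤ B i j) :
    (NormedSpace.exp B).trace = (n : ℝ) ↔ ∀ k : ℕ, 1 ≤ k → (B ^ k).trace = 0 := by
  have hiff := (Matrix.hasSum_trace_exp B).eq_zeroth_term_iff fun k _ =>
    mul_nonneg (by positivity) (Matrix.trace_pow_nonneg hB k)
  simpa [Nat.factorial_ne_zero] using hiff
end

section
/- Let B be an n×n real matrix all of whose entries are nonnegative. Then trace(exp B) = n if and only if the support digraph of B contains no directed cycle, i.e. there is no integer k ≥ 1 and function f : {0,1,...,k} → {1,...,n} with f(0) = f(k) and B (f(j)) (f(j+1)) > 0 for all 0 ≤ j < k. -/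
set_option maxHeartbeats 1000000

open scoped Matrix

private lemma pow_entry_nonneg {n : ℕ} (B : Matrix (Fin n) (Fin n) ℝ)
    (hB : ∀ i j, 0 ≤ B i j) : ∀ k i j, 0 ≤ (B ^ k) i j := by
  intro k
  induction k with
  | zero =>
    intro i j
    simp [Matrix.one_apply]
    split <;> norm_num
  | succ k ih =>
    intro i j
    rw [pow_succ, Matrix.mul_apply]
    exact Finset.sum_nonneg fun m _ => mul_nonneg (ih i m) (hB m j)

private lemma walk_pos {n : ℕ} (B : Matrix (Fin n) (Fin n) ℝ)
    (hB : ∀ i j, 0 ≤ B i j) :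
    ∀ k (g : ℕ → Fin n), (∀ j < k, 0 < B (g j) (g (j + 1))) →
      0 < (B ^ k) (g 0) (g k) := by
  intro k
  induction k with
  | zero => intro g _; simp [Matrix.one_apply]
  | succ k ih =>
    intro g hg
    rw [pow_succ, Matrix.mul_apply]
    refine Finset.sum_pos' (fun m _ => mul_nonneg (pow_entry_nonneg B hB k _ m) (hB m _)) ?_
    refine ⟨g k, Finset.mem_univ _, ?_⟩
    exact mul_pos (ih g fun j hj => hg j (Nat.lt_succ_of_lt hj)) (hg k (Nat.lt_succ_self k))

private lemma pos_walk {n : ℕ} (B : Matrix (Fin n) (Fin n) ℝ)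
    (hB : ∀ i j, 0 ≤ B i j) :
    ∀ k i j, 0 < (B ^ k) i j → ∃ g : ℕ → Fin n, g 0 = i ∧ g k = j ∧
      ∀ m < k, 0 < B (g m) (g (m + 1)) := by
  intro k
  induction k with
  | zero =>
    intro i j h
    simp only [pow_zero, Matrix.one_apply] at h
    by_cases hij : i = j
    · exact ⟨fun _ => i, rfl, hij, by omega⟩
    · simp [hij] at h
  | succ k ih =>
    intro i j h
    rw [pow_succ, Matrix.mul_apply] at h
    have hne : ∃ m ∈ Finset.univ, (B ^ k) i m * B m j ≠ 0 := by
      by_contra hc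
      push_neg at hc
      have : ∑ m, (B ^ k) i m * B m j = 0 :=
        Finset.sum_eq_zero fun m hm => hc m hm
      rw [this] at h; exact lt_irrefl 0 h
    obtain ⟨m, -, hm⟩ := hne
    have h1 : 0 < (B ^ k) i m := by
      rcases lt_or_eq_of_le (pow_entry_nonneg B hB k i m) with h1 | h1
      · exact h1
      · exact absurd (by rw [← h1, zero_mul]) hm
    have h2 : 0 < B m j := by
      rcases lt_or_eq_of_le (hB m j) with h2 | h2
      · exact h2
      · exact absurd (by rw [← h2, mul_zero]) hm
    obtain ⟨g, hg0, hgk, hge⟩ := ih i m h1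
    refine ⟨fun x => if x ≤ k then g x else j, by simpa using hg0, by simp, ?_⟩
    intro m' hm'
    rcases Nat.lt_or_ge m' k with h' | h'
    · have e1 : m' ≤ k := Nat.le_of_lt h'
      have e2 : m' + 1 ≤ k := h'
      simpa [e1, e2] using hge m' h'
    · have : m' = k := by omega
      subst this
      simpa [hgk] using h2

/-- For a nonnegative `n × n` real matrix `B`, the trace of the matrix exponential
of `B` equals `n` if and only if the support digraph of `B` (edges at strictly
positive entries) contains no directed cycle. -/
theorem trace_exp_eq_iff_no_directed_cycle (n : ℕ) (B : Matrix (Fin n) (Fin n) ℝ)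
    (hB : ∀ i j, 0 ≤ B i j) :
    (NormedSpace.exp B).trace = (n : ℝ) ↔
      ¬ ∃ k : ℕ, 1 ≤ k ∧ ∃ f : Fin (k + 1) → Fin n, f 0 = f (Fin.last k) ∧
        ∀ j : Fin k, 0 < B (f j.castSucc) (f j.succ) := by
  letI : SeminormedRing (Matrix (Fin n) (Fin n) ℝ) := Matrix.linftyOpSemiNormedRing
  letI : NormedRing (Matrix (Fin n) (Fin n) ℝ) := Matrix.linftyOpNormedRing
  letI : NormedAlgebra ℝ (Matrix (Fin n) (Fin n) ℝ) := Matrix.linftyOpNormedAlgebra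
  have hsum := NormedSpace.expSeries_summable' (𝕂 := ℝ) B
  let T : Matrix (Fin n) (Fin n) ℝ →L[ℝ] ℝ :=
    LinearMap.toContinuousLinearMap (Matrix.traceLinearMap (Fin n) ℝ ℝ)
  have hT : ∀ M : Matrix (Fin n) (Fin n) ℝ, T M = M.trace := fun _ => rfl
  have h1 : (NormedSpace.exp B).trace = ∑' k : ℕ, ((Nat.factorial k : ℝ))⁻¹ • (B ^ k).trace := by
    rw [NormedSpace.exp_eq_tsum (𝕂 := ℝ), ← hT, T.map_tsum hsum]
    congr 1
    funext k
    rw [map_smul, hT]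
  have hsum2 : Summable (fun k : ℕ => ((Nat.factorial k : ℝ))⁻¹ • (B ^ k).trace) := by
    refine (hsum.map T T.continuous).congr fun k => ?_
    show T _ = _
    rw [map_smul, hT]
  have hsum3 : Summable (fun k : ℕ => ((Nat.factorial (k + 1) : ℝ))⁻¹ • (B ^ (k + 1)).trace) :=
    (summable_nat_add_iff (f := fun k : ℕ => ((Nat.factorial k : ℝ))⁻¹ • (B ^ k).trace) 1).mpr hsum2
  have htr_nonneg : ∀ k : ℕ, 0 ≤ (B ^ k).trace := fun k =>
    Finset.sum_nonneg fun i _ => pow_entry_nonneg B hB k i i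
  have hterm_nonneg : ∀ k : ℕ, 0 ≤ ((Nat.factorial (k + 1) : ℝ))⁻¹ • (B ^ (k + 1)).trace := fun k =>
    smul_nonneg (by positivity) (htr_nonneg (k + 1))
  have h0 : ((Nat.factorial 0 : ℝ))⁻¹ • (B ^ 0).trace = (n : ℝ) := by
    simp [Matrix.trace_one]
  have hsplit : (NormedSpace.exp B).trace
      = (n : ℝ) + ∑' k : ℕ, ((Nat.factorial (k + 1) : ℝ))⁻¹ • (B ^ (k + 1)).trace := by
    rw [h1, hsum2.tsum_eq_zero_add, h0]
  constructor
  · -- trace = n → no cycle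
    intro heq
    rintro ⟨k, hk, f, hf0, hfe⟩
    have hS : ∑' k : ℕ, ((Nat.factorial (k + 1) : ℝ))⁻¹ • (B ^ (k + 1)).trace = 0 := by
      have := hsplit.symm.trans heq
      linarith
    -- each term is zero
    have hz : ∀ m : ℕ, ((Nat.factorial (m + 1) : ℝ))⁻¹ • (B ^ (m + 1)).trace = 0 := by
      intro m
      have hle := hsum3.le_tsum m (fun j _ => hterm_nonneg j)
      have := hterm_nonneg m
      rw [hS] at hle
      linarith
    obtain ⟨m, rfl⟩ : ∃ m, k = m + 1 := ⟨k - 1, by omega⟩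
    have htr0 : (B ^ (m + 1)).trace = 0 := by
      have := hz m
      have h2 : ((Nat.factorial (m + 1) : ℝ))⁻¹ ≠ 0 := by positivity
      field_simp at this
      exact (smul_eq_zero.mp this).resolve_left (by positivity)
    -- build the walk
    set g : ℕ → Fin n := fun x => if h : x < m + 2 then f ⟨x, h⟩ else f 0 with hg
    have hedge : ∀ j < m + 1, 0 < B (g j) (g (j + 1)) := by
      intro j hj
      have e1 : g j = f (Fin.castSucc ⟨j, hj⟩) := by
        simp only [hg]
        rw [dif_pos (by omega)]
        rfl
      have e2 : g (j + 1) = f (Fin.succ ⟨j, hj⟩) := by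
        simp only [hg]
        rw [dif_pos (by omega)]
        rfl
      rw [e1, e2]
      exact hfe ⟨j, hj⟩
    have hpos : 0 < (B ^ (m + 1)) (g 0) (g (m + 1)) := walk_pos B hB (m + 1) g hedge
    have hg0 : g 0 = f 0 := by simp [hg]
    have hgk : g (m + 1) = f 0 := by
      simp only [hg]
      rw [dif_pos (by omega)]
      rw [hf0]
      rfl
    rw [hg0, hgk] at hpos
    have : 0 < (B ^ (m + 1)).trace := by
      refine Finset.sum_pos' (fun i _ => pow_entry_nonneg B hB (m + 1) i i) ?_
      exact ⟨f 0, Finset.mem_univ _, hpos⟩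
    rw [htr0] at this
    exact lt_irrefl 0 this
  · -- no cycle → trace = n
    intro hnoc
    have hdiag : ∀ k : ℕ, ∀ i, (B ^ (k + 1)) i i = 0 := by
      intro k i
      by_contra hne
      have hpos : 0 < (B ^ (k + 1)) i i :=
        lt_of_le_of_ne (pow_entry_nonneg B hB (k + 1) i i) (Ne.symm hne)
      obtain ⟨g, hg0, hgk, hge⟩ := pos_walk B hB (k + 1) i i hpos
      refine hnoc ⟨k + 1, le_refl _ |>.trans (by omega), fun j => g j.val, ?_, ?_⟩
      · show g 0 = g (k + 1)
        rw [hg0, hgk]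
      · intro j
        exact hge j.val j.isLt
    have htr0 : ∀ k : ℕ, (B ^ (k + 1)).trace = 0 := fun k =>
      Finset.sum_eq_zero fun i _ => hdiag k i
    rw [hsplit]
    have : ∑' k : ℕ, ((Nat.factorial (k + 1) : ℝ))⁻¹ • (B ^ (k + 1)).trace = 0 := by
      convert tsum_zero with k
      rw [htr0 k, smul_zero]
    rw [this, add_zero]
end
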